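/- Suppose each P*_s (for s ∈ S) satisfies P*_s(X_0 = s) = 1, P*_s(T < ∞) = 1, E*_s(T) < ∞, and regenerates at T with restart laws (P*_s : s ∈ S). Let π = (π_s : s ∈ S) be strictly positive with ∑_{s∈S} π_s · E*_s(T) = 1, and define the probability measure ℙ* on I^ℕ by ℙ*(B) = ∑_{s∈S} π_s ∑_{n≥0} P*_s({T > n} ∩ Θ_n^{-1}B). Then ℙ* is stationary (i.e., invariant under the shift Θ_1) if and only if π is invariant for the stochastic matrix Q = (q_{s s'}) with q_{s s'} = P*_s(X_T = s'), that is, π_s = ∑_{s'∈S} π_{s'} q_{s' s} for every s ∈ S. -/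

import Mathlib

open MeasureTheory Filter
open scoped ENNReal NNReal ENat

variable {I : Type*} [MeasurableSpace I]

/-- The shift map `Θ_q` on sequences: `(Θ_q x) n = x (n + q)`. -/
def shiftI (q : ℕ) (x : ℕ → I) : ℕ → I := fun n => x (n + q)

/-- The hitting time of a different class:
`T(x) = inf {n > 0 : x n ∈ S \ C(x 0)}` (with `inf ∅ = ∞`), where the class `C(x 0)` is
taken with respect to the equivalence relation `sim`. -/
noncomputable def hitT (S : Finset I) (sim : I → I → Prop) (x : ℕ → I) : ℕ∞ :=
  sInf ((fun n : ℕ => (n : ℕ∞)) '' {n : ℕ | 0 < n ∧ x n ∈ S ∧ ¬ sim (x 0) (x n)})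

/-- The iterated hitting times of different classes: `T^0 = 0`, `T^1 = T` and
`T^{n+1} = T^n + T ∘ Θ_{T^n}` (with value `∞` as soon as one of the terms is infinite). -/
noncomputable def hitTn (S : Finset I) (sim : I → I → Prop) : ℕ → (ℕ → I) → ℕ∞
  | 0, _ => 0
  | n + 1, x =>
    let t := hitTn S sim n x
    if t = ⊤ then (⊤ : ℕ∞) else t + hitT S sim (shiftI t.toNat x)

/-- The σ-field `B_n = σ(X_0, …, X_n)` generated by the first `n + 1` coordinates. -/
def coordSA (I : Type*) [MeasurableSpace I] (n : ℕ) : MeasurableSpace (ℕ → I) :=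
  ⨆ k ≤ n, MeasurableSpace.comap (fun x : ℕ → I => x k) inferInstance

/-- The collection of events in the σ-field `B_{T'}` of the stopping time `T'`:
measurable sets `B` with `B ∩ {T' ≤ n} ∈ B_n` for all `n`. -/
def stopSets (T' : (ℕ → I) → ℕ∞) : Set (Set (ℕ → I)) :=
  {B | MeasurableSet B ∧ ∀ n : ℕ, MeasurableSet[coordSA I n] (B ∩ {x | T' x ≤ (n : ℕ∞)})}

/-- `P` regenerates at the stopping time `T'` with restart laws `(Ps s : s ∈ S)`:
`X_{T'} ∈ S` a.s. on `{T' < ∞}`, and for every bounded measurable `h`,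
`E[1_{T' < ∞} · h ∘ Θ_{T'} ∣ B_{T'}] = 1_{T' < ∞} · E_{X_{T'}}(h)` `P`-a.s., expressed by the
defining integral identity over all events of `B_{T'}`. -/
def Regen (S : Finset I) (T' : (ℕ → I) → ℕ∞) (Ps : I → Measure (ℕ → I))
    (P : Measure (ℕ → I)) : Prop :=
  P ({x | T' x < ⊤} ∩ {x | x (T' x).toNat ∉ (S : Set I)}) = 0 ∧
  ∀ h : (ℕ → I) → ℝ, Measurable h → (∃ M, ∀ y, |h y| ≤ M) →
    ∀ B ∈ stopSets T',
      ∫ x in B ∩ {x | T' x < ⊤}, h (shiftI (T' x).toNat x) ∂P =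
      ∫ x in B ∩ {x | T' x < ⊤}, (∫ y, h y ∂ Ps (x (T' x).toNat)) ∂P

/-- The expectation `E(T)` of the hitting time `T` under `P`. -/
noncomputable def hitET (S : Finset I) (sim : I → I → Prop) (P : Measure (ℕ → I)) : ℝ≥0∞ :=
  ∫⁻ x, (hitT S sim x : ℝ≥0∞) ∂P

/-- The measure `ℙ(B) = ∑_{s ∈ S} π_s ∑_{n ≥ 0} P_s({T > n} ∩ Θ_n⁻¹ B)`. -/
noncomputable def lawP (S : Finset I) (sim : I → I → Prop) (π : I → ℝ≥0)
    (P : I → Measure (ℕ → I)) : Measure (ℕ → I) :=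
  ∑ s ∈ S, π s •
    Measure.sum (fun n : ℕ => ((P s).restrict {x | (n : ℕ∞) < hitT S sim x}).map (shiftI n))

/-- The transition matrix entries `q_{s s'} = P*_s(X_T = s')`. -/
noncomputable def qmat (S : Finset I) (sim : I → I → Prop) (Ps : I → Measure (ℕ → I))
    (s s' : I) : ℝ≥0∞ :=
  Ps s {x | hitT S sim x < ⊤ ∧ x (hitT S sim x).toNat = s'}

/-!
For a path law `P` and a time `τ`, put `occupationMeasure τ P = ∑ₙ Θₙ (P restricted to {n < τ})`,
so that `ℙ* = ∑ₛ πₛ occupationMeasure T P*ₛ`. Splitting `{n < τ}` into `{τ = n + 1}` and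
`{n + 1 < τ}` gives the cycle identity `Θ₁ occupationMeasure + P = occupationMeasure + L`, where
`L` is the law of `Θ_τ` on `{τ < ∞}`. Regeneration at `T` identifies `L` for `P*ₛ` with
`∑_{s'} q_{s s'} P*_{s'}`, hence `ℙ* ∘ Θ₁⁻¹ + ∑ₛ πₛ P*ₛ = ℙ* + ∑_{s'} (πQ)_{s'} P*_{s'}`.
Since `ℙ*` has finite mass `∑ₛ πₛ E*ₛ(T)`, stationarity is equivalent to
`∑ₛ πₛ P*ₛ = ∑ₛ (πQ)ₛ P*ₛ`, and as `P*ₛ` starts at `s`, comparing the laws of `X₀` gives `π = πQ`.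
-/

lemma measurable_shiftI (q : ℕ) : Measurable (shiftI (I := I) q) :=
  measurable_pi_lambda _ fun n => measurable_pi_apply (n + q)

lemma shiftI_comp_shiftI {J : Type*} (p q : ℕ) : shiftI (I := J) p ∘ shiftI q = shiftI (q + p) := by
  funext x n
  simp only [Function.comp_apply, shiftI]
  congr 1
  omega

lemma coordSA_le (n : ℕ) : coordSA I n ≤ MeasurableSpace.pi :=
  iSup₂_le fun k _ => (measurable_pi_apply k).comap_le

lemma measurable_coordSA_apply {n k : ℕ} (hk : k ≤ n) :
    Measurable[coordSA I n] fun x : ℕ → I => x k :=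
  Measurable.of_comap_le <| le_iSup₂ (f := fun k (_ : k ≤ n) =>
    MeasurableSpace.comap (fun x : ℕ → I => x k) inferInstance) k hk

lemma measurable_of_measurableSet_le_coe {α : Type*} [MeasurableSpace α] {τ : α → ℕ∞}
    (hτ : ∀ n : ℕ, MeasurableSet {x | τ x ≤ n}) : Measurable τ := by
  refine measurable_to_countable' fun k => ?_
  induction k using ENat.recTopCoe with
  | top =>
    have : τ ⁻¹' {⊤} = ⋂ n : ℕ, {x | τ x ≤ n}ᶜ := by
      ext x
      simp [ENat.eq_top_iff_forall_gt]
    exact this ▸ .iInter fun n => (hτ n).compl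
  | coe k =>
    cases k with
    | zero => simpa [Set.preimage, nonpos_iff_eq_zero] using hτ 0
    | succ m =>
      have : τ ⁻¹' {((m + 1 : ℕ) : ℕ∞)} = {x | τ x ≤ (m + 1 : ℕ)} \ {x | τ x ≤ m} := by
        ext x
        simp only [Set.mem_preimage, Set.mem_singleton_iff, Set.mem_sdiff, Set.mem_ofPred_eq,
          not_le]
        constructor
        · rintro h
          simpa [h] using ENat.natCast_lt_natCast.mpr m.lt_succ_self
        · rintro ⟨h₁, h₂⟩
          exact le_antisymm h₁ (by exact_mod_cast Order.add_one_le_of_lt h₂)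
      exact this ▸ (hτ _).diff (hτ m)

section HittingTime

variable (S : Finset I) (sim : I → I → Prop)

omit [MeasurableSpace I] in
lemma hitT_le_coe_iff (x : ℕ → I) (n : ℕ) :
    hitT S sim x ≤ n ↔ ∃ k ≤ n, 0 < k ∧ x k ∈ S ∧ ¬ sim (x 0) (x k) := by
  constructor
  · intro h
    have hne : ((fun n : ℕ => (n : ℕ∞)) '' {k | 0 < k ∧ x k ∈ S ∧ ¬ sim (x 0) (x k)}).Nonempty := by
      by_contra he
      simp [hitT, Set.not_nonempty_iff_eq_empty.mp he] at h
    obtain ⟨k, hk, hkT⟩ := csInf_mem hne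
    refine ⟨k, ?_, hk⟩
    have : (k : ℕ∞) ≤ n := (congrArg (· ≤ (n : ℕ∞)) hkT).mpr h
    exact_mod_cast this
  · rintro ⟨k, hkn, hk⟩
    exact (sInf_le ⟨k, hk, rfl⟩ : hitT S sim x ≤ k).trans (by exact_mod_cast hkn)

lemma measurableSet_hitT_le [Countable I] [MeasurableSingletonClass I] (n : ℕ) :
    MeasurableSet[coordSA I n] {x : ℕ → I | hitT S sim x ≤ n} := by
  simp_rw [hitT_le_coe_iff, Set.ofPred_exists, Set.ofPred_and]
  refine MeasurableSet.iUnion fun k => ?_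
  by_cases hk : k ≤ n
  · simp only [hk, Set.ofPred_true, Set.univ_inter]
    exact ((measurable_coordSA_apply (Nat.zero_le n)).prodMk (measurable_coordSA_apply hk))
      ((Set.to_countable {p : I × I | 0 < k ∧ p.2 ∈ S ∧ ¬ sim p.1 p.2}).measurableSet)
  · simp [hk]

lemma measurable_hitT [Countable I] [MeasurableSingletonClass I] : Measurable (hitT S sim) :=
  measurable_of_measurableSet_le_coe fun n => coordSA_le n _ (measurableSet_hitT_le S sim n)

end HittingTime

section Occupation

variable (τ : (ℕ → I) → ℕ∞) (P : Measure (ℕ → I))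

noncomputable def occupationMeasure : Measure (ℕ → I) :=
  Measure.sum fun n : ℕ => (P.restrict {x | (n : ℕ∞) < τ x}).map (shiftI n)

noncomputable def lawAfter : Measure (ℕ → I) :=
  (P.restrict {x | τ x < ⊤}).map fun x => shiftI (τ x).toNat x

instance [IsFiniteMeasure P] : IsFiniteMeasure (lawAfter τ P) := by
  rw [lawAfter]
  infer_instance

variable {τ}

lemma measurable_shiftI_toNat (hτ : Measurable τ) : Measurable fun x => shiftI (τ x).toNat x :=
  (measurable_from_prod_countable_left (f := fun p : (ℕ → I) × ℕ => shiftI p.2 p.1)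
    measurable_shiftI).comp
    (measurable_id.prodMk ((Measurable.of_discrete (f := ENat.toNat)).comp hτ))

lemma measurable_apply_toNat (hτ : Measurable τ) : Measurable fun x : ℕ → I => x (τ x).toNat :=
  (measurable_from_prod_countable_left (f := fun p : (ℕ → I) × ℕ => p.1 p.2)
    measurable_pi_apply).comp
    (measurable_id.prodMk ((Measurable.of_discrete (f := ENat.toNat)).comp hτ))

lemma occupationMeasure_apply {B : Set (ℕ → I)} (hB : MeasurableSet B) :
    occupationMeasure τ P B = ∑' n : ℕ, P ({x | (n : ℕ∞) < τ x} ∩ shiftI n ⁻¹' B) := by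
  rw [occupationMeasure, Measure.sum_apply _ hB]
  refine tsum_congr fun n => ?_
  rw [Measure.map_apply (measurable_shiftI n) hB, Measure.restrict_apply (measurable_shiftI n hB),
    Set.inter_comm]

lemma lawAfter_apply (hτ : Measurable τ) {B : Set (ℕ → I)} (hB : MeasurableSet B) :
    lawAfter τ P B = ∑' n : ℕ, P ({x | τ x = n} ∩ shiftI n ⁻¹' B) := by
  have hdecomp : (fun x => shiftI (τ x).toNat x) ⁻¹' B ∩ {x | τ x < ⊤}
      = ⋃ n : ℕ, {x | τ x = n} ∩ shiftI n ⁻¹' B := by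
    ext x
    simp only [Set.mem_inter_iff, Set.mem_preimage, Set.mem_ofPred_eq, Set.mem_iUnion]
    constructor
    · rintro ⟨hxB, hx⟩
      exact ⟨(τ x).toNat, (ENat.natCast_toNat hx.ne).symm, hxB⟩
    · rintro ⟨n, hn, hxB⟩
      simp [hn, hxB]
  rw [lawAfter, Measure.map_apply (measurable_shiftI_toNat hτ) hB,
    Measure.restrict_apply (measurable_shiftI_toNat hτ hB), hdecomp, measure_iUnion]
  · intro m n hmn
    refine Set.disjoint_left.mpr fun x hm hn => hmn ?_
    exact_mod_cast hm.1.symm.trans hn.1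
  · exact fun n => (hτ (measurableSet_singleton _)).inter (measurable_shiftI n hB)

theorem map_shiftI_occupationMeasure_add (hτ : Measurable τ) :
    (occupationMeasure τ P).map (shiftI 1) + P = occupationMeasure τ P + lawAfter τ P := by
  ext B hB
  have hsplit : ∀ n : ℕ, P ({x | (n : ℕ∞) ≤ τ x} ∩ shiftI n ⁻¹' B)
      = P ({x | (n : ℕ∞) < τ x} ∩ shiftI n ⁻¹' B) + P ({x | τ x = n} ∩ shiftI n ⁻¹' B) := by
    intro n
    have hunion : {x | (n : ℕ∞) ≤ τ x} = {x | (n : ℕ∞) < τ x} ∪ {x | τ x = n} := by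
      ext x
      simp [le_iff_lt_or_eq, eq_comm]
    have hmeas : MeasurableSet ({x | τ x = n} ∩ shiftI n ⁻¹' B) :=
      (hτ (measurableSet_singleton _)).inter (measurable_shiftI n hB)
    rw [hunion, Set.union_inter_distrib_right, measure_union _ hmeas]
    exact Set.disjoint_left.mpr fun x hlt heq => hlt.1.ne heq.1.symm
  have hsucc : ∀ n : ℕ, {x | (n : ℕ∞) < τ x} = {x | ((n + 1 : ℕ) : ℕ∞) ≤ τ x} := by
    intro n
    ext x
    simp [Nat.cast_succ, ENat.add_one_le_iff (ENat.natCast_ne_top n)]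
  calc (occupationMeasure τ P).map (shiftI 1) B + P B
      = ∑' n : ℕ, P ({x | ((n + 1 : ℕ) : ℕ∞) ≤ τ x} ∩ shiftI (n + 1) ⁻¹' B)
          + P ({x | ((0 : ℕ) : ℕ∞) ≤ τ x} ∩ shiftI 0 ⁻¹' B) := by
        rw [Measure.map_apply (measurable_shiftI 1) hB,
          occupationMeasure_apply P (measurable_shiftI 1 hB)]
        simp only [← Set.preimage_comp, shiftI_comp_shiftI, hsucc, Nat.cast_zero, zero_le,
          Set.ofPred_true, Set.univ_inter]
        rfl
    _ = ∑' n : ℕ, P ({x | (n : ℕ∞) ≤ τ x} ∩ shiftI n ⁻¹' B) := by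
        rw [tsum_eq_zero_add' (f := fun n : ℕ => P ({x | (n : ℕ∞) ≤ τ x} ∩ shiftI n ⁻¹' B))
          ENNReal.summable, add_comm]
    _ = (occupationMeasure τ P + lawAfter τ P) B := by
        rw [Measure.add_apply, occupationMeasure_apply P hB, lawAfter_apply P hτ hB,
          ← ENNReal.tsum_add]
        exact tsum_congr hsplit

lemma lintegral_toENNReal_eq_tsum {α : Type*} [MeasurableSpace α] {σ : α → ℕ∞}
    (hσ : Measurable σ) (μ : Measure α) :
    ∫⁻ x, (σ x : ℝ≥0∞) ∂μ = ∑' n : ℕ, μ {x | (n : ℕ∞) < σ x} := by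
  have hpt : ∀ x, (σ x : ℝ≥0∞) = ∑' n : ℕ, {x | (n : ℕ∞) < σ x}.indicator 1 x := by
    intro x
    simp only [Set.indicator_apply, Set.mem_ofPred_eq, Pi.one_apply]
    induction σ x using ENat.recTopCoe with
    | top => simp
    | coe k =>
      rw [tsum_eq_sum (s := Finset.range k) fun n hn => by simpa using hn]
      simp [Finset.filter_true_of_mem fun n hn => Finset.mem_range.mp hn]
  have hmeas (n : ℕ) : MeasurableSet {x | (n : ℕ∞) < σ x} :=
    hσ (.of_discrete (s := Set.Ioi (n : ℕ∞)))
  rw [lintegral_congr hpt,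
    lintegral_tsum fun n => (measurable_one.indicator (hmeas n)).aemeasurable]
  exact tsum_congr fun n => lintegral_indicator_one (hmeas n)

lemma occupationMeasure_univ (hτ : Measurable τ) :
    occupationMeasure τ P Set.univ = ∫⁻ x, (τ x : ℝ≥0∞) ∂P := by
  simp [occupationMeasure_apply P MeasurableSet.univ, lintegral_toENNReal_eq_tsum hτ]

end Occupation

lemma integral_comp_eq_sum_of_fintype {α ι : Type*} [MeasurableSpace α] [Fintype ι]
    [MeasurableSpace ι] [MeasurableSingletonClass ι] {μ : Measure α} [IsFiniteMeasure μ]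
    {X : α → ι} (hX : Measurable X) (g : ι → ℝ) :
    ∫ x, g (X x) ∂μ = ∑ i, μ.real (X ⁻¹' {i}) * g i := by
  rw [← integral_map hX.aemeasurable (measurable_of_finite g).aestronglyMeasurable,
    integral_fintype .of_finite]
  simp [map_measureReal_apply hX (measurableSet_singleton _)]

section Regeneration

variable {S : Finset I} {T : (ℕ → I) → ℕ∞} {Ps : I → Measure (ℕ → I)} {P : Measure (ℕ → I)}

lemma Regen.measure_value_eq_zero (hreg : Regen S T Ps P) {i : I} (hi : i ∉ S) :
    P {x | T x < ⊤ ∧ x (T x).toNat = i} = 0 :=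
  measure_mono_null (by rintro x ⟨hT, hx⟩; exact ⟨hT, by simpa [hx] using hi⟩) hreg.1

variable [Fintype I] [MeasurableSingletonClass I]

theorem Regen.lawAfter_eq_sum [IsFiniteMeasure P] (hreg : Regen S T Ps P)
    (hT : ∀ n : ℕ, MeasurableSet[coordSA I n] {x | T x ≤ n})
    (hPs : ∀ s ∈ S, IsProbabilityMeasure (Ps s)) :
    lawAfter T P = ∑ s ∈ S, P {x | T x < ⊤ ∧ x (T x).toNat = s} • Ps s := by
  have hTm : Measurable T := measurable_of_measurableSet_le_coe fun n => coordSA_le n _ (hT n)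
  set q : I → ℝ≥0∞ := fun i => P {x | T x < ⊤ ∧ x (T x).toNat = i}
  ext B hB
  have hbdd : ∃ M, ∀ y, |B.indicator (1 : (ℕ → I) → ℝ) y| ≤ M :=
    ⟨1, fun y => by by_cases hy : y ∈ B <;> simp [hy]⟩
  have hreg_B := hreg.2 _ (measurable_one.indicator hB) hbdd Set.univ
    ⟨.univ, fun n => by simpa using hT n⟩
  have hreal : (lawAfter T P).real B = ∑ i, (q i).toReal * (Ps i).real B := by
    rw [← integral_indicator_one hB, lawAfter,
      integral_map (measurable_shiftI_toNat hTm).aemeasurable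
        (measurable_one.indicator hB).aestronglyMeasurable]
    simp only [Set.univ_inter, integral_indicator_one hB] at hreg_B
    rw [hreg_B,
      integral_comp_eq_sum_of_fintype (measurable_apply_toNat hTm) fun i => (Ps i).real B]
    refine Finset.sum_congr rfl fun i _ => ?_
    rw [measureReal_restrict_apply (measurable_apply_toNat hTm (measurableSet_singleton i)),
      Set.inter_comm]
    rfl
  have hfin : ∀ s ∈ S, q s * Ps s B ≠ ⊤ := fun s hs =>
    have := hPs s hs; ENNReal.mul_ne_top (measure_ne_top _ _) (measure_ne_top _ _)
  have hsum : ∑ i, (q i).toReal * (Ps i).real B = ∑ s ∈ S, (q s * Ps s B).toReal := by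
    rw [← Finset.sum_subset (Finset.subset_univ S) fun i _ hi => by
      simp [q, hreg.measure_value_eq_zero hi]]
    exact Finset.sum_congr rfl fun s _ => ENNReal.toReal_mul.symm
  rw [Measure.finsetSum_apply, ← ENNReal.toReal_eq_toReal_iff' (measure_ne_top _ _)
    (ENNReal.sum_ne_top.mpr fun s hs => by simpa using hfin s hs)]
  simp only [Measure.smul_apply, smul_eq_mul]
  rw [ENNReal.toReal_sum hfin, ← hsum, ← hreal]
  rfl

end Regeneration

lemma MeasureTheory.Measure.eq_iff_eq_of_add_eq_add {α : Type*} [MeasurableSpace α]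
    {μ₁ μ₂ ν₁ ν₂ : Measure α} [IsFiniteMeasure μ₂] [IsFiniteMeasure ν₁]
    (h : μ₁ + ν₁ = μ₂ + ν₂) : μ₁ = μ₂ ↔ ν₁ = ν₂ := by
  constructor
  · rintro rfl
    ext s
    exact (ENNReal.add_right_inj (measure_ne_top μ₁ s)).mp (by simpa using congrArg (· s) h)
  · rintro rfl
    ext s
    exact (ENNReal.add_left_inj (measure_ne_top ν₁ s)).mp (by simpa using congrArg (· s) h)

section Start

variable [MeasurableSingletonClass I] {S : Finset I} {P : I → Measure (ℕ → I)}

lemma measure_eval_zero_eq_zero {μ : Measure (ℕ → I)} [IsProbabilityMeasure μ] {s t : I}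
    (hs : μ {x | x 0 = s} = 1) (hst : s ≠ t) : μ {x | x 0 = t} = 0 := by
  have hmeas : MeasurableSet ((fun x : ℕ → I => x 0) ⁻¹' {s}) :=
    measurable_pi_apply 0 (measurableSet_singleton s)
  refine measure_mono_null (fun x (hx : x 0 = t) (hxs : x 0 = s) => hst (hxs.symm.trans hx)) ?_
  exact (prob_compl_eq_zero_iff hmeas).mpr hs

lemma sum_smul_eq_sum_smul_iff (hP : ∀ s ∈ S, IsProbabilityMeasure (P s))
    (hstart : ∀ s ∈ S, P s {x | x 0 = s} = 1) {a b : I → ℝ≥0∞} :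
    ∑ s ∈ S, a s • P s = ∑ s ∈ S, b s • P s ↔ ∀ s ∈ S, a s = b s := by
  refine ⟨fun h t ht => ?_, fun h => Finset.sum_congr rfl fun s hs => by rw [h s hs]⟩
  have hevent (c : I → ℝ≥0∞) : (∑ s ∈ S, c s • P s) {x | x 0 = t} = c t := by
    rw [Measure.finsetSum_apply, Finset.sum_eq_single_of_mem t ht fun s hs hst => by
      have := hP s hs
      simp [measure_eval_zero_eq_zero (hstart s hs) hst]]
    simp [hstart t ht]
  simpa only [hevent] using congrArg (· {x | x 0 = t}) h

end Start

lemma isFiniteMeasure_sum_smul {S : Finset I} {P : I → Measure (ℕ → I)}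
    (hP : ∀ s ∈ S, IsProbabilityMeasure (P s)) (a : I → ℝ≥0) :
    IsFiniteMeasure (∑ s ∈ S, (a s : ℝ≥0∞) • P s) := by
  refine ⟨?_⟩
  simp only [Measure.finsetSum_apply, Measure.smul_apply, smul_eq_mul]
  exact ENNReal.sum_lt_top.mpr fun s hs =>
    have := hP s hs; ENNReal.mul_lt_top ENNReal.coe_lt_top (measure_lt_top (P s) _)

lemma lawP_eq_sum_occupationMeasure (S : Finset I) (sim : I → I → Prop) (π : I → ℝ≥0)
    (P : I → Measure (ℕ → I)) :
    lawP S sim π P = ∑ s ∈ S, π s • occupationMeasure (hitT S sim) (P s) := rfl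

lemma map_shiftI_lawP_add (S : Finset I) (sim : I → I → Prop) (π : I → ℝ≥0)
    (P : I → Measure (ℕ → I)) (hT : Measurable (hitT S sim)) :
    (lawP S sim π P).map (shiftI 1) + ∑ s ∈ S, (π s : ℝ≥0∞) • P s
      = lawP S sim π P + ∑ s ∈ S, (π s : ℝ≥0∞) • lawAfter (hitT S sim) (P s) := by
  rw [lawP_eq_sum_occupationMeasure, Measure.map_finset_sum (measurable_shiftI 1).aemeasurable]
  simp only [Measure.map_smul, ← Measure.coe_nnreal_smul, ← Finset.sum_add_distrib, ← smul_add]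
  exact Finset.sum_congr rfl fun s _ => by rw [← map_shiftI_occupationMeasure_add (P s) hT]

lemma isFiniteMeasure_lawP {S : Finset I} {sim : I → I → Prop} {P : I → Measure (ℕ → I)}
    (π : I → ℝ≥0) (hT : Measurable (hitT S sim)) (hET : ∀ s ∈ S, hitET S sim (P s) < ⊤) :
    IsFiniteMeasure (lawP S sim π P) := by
  refine ⟨?_⟩
  simp only [lawP_eq_sum_occupationMeasure, Measure.finsetSum_apply, Measure.smul_apply,
    occupationMeasure_univ _ hT]
  exact ENNReal.sum_lt_top.mpr fun s hs => ENNReal.mul_lt_top ENNReal.coe_lt_top (hET s hs)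

theorem stmt_6_general [Fintype I] [MeasurableSingletonClass I]
    (S : Finset I)
    (sim : I → I → Prop)
    (Pstar : I → Measure (ℕ → I)) (hprob : ∀ s ∈ S, IsProbabilityMeasure (Pstar s))
    (hstart : ∀ s ∈ S, Pstar s {x | x 0 = s} = 1)
    (hETfin : ∀ s ∈ S, hitET S sim (Pstar s) < ⊤)
    (hregen : ∀ s ∈ S, Regen S (hitT S sim) Pstar (Pstar s))
    (π : I → ℝ≥0) :
    (lawP S sim π Pstar).map (shiftI 1) = lawP S sim π Pstar ↔
      ∀ s ∈ S, (π s : ℝ≥0∞) = ∑ s' ∈ S, (π s' : ℝ≥0∞) * qmat S sim Pstar s' s := by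
  have hT := measurable_hitT S sim
  have := isFiniteMeasure_lawP π hT hETfin
  have := isFiniteMeasure_sum_smul hprob π
  have hregen_sum : ∑ s ∈ S, (π s : ℝ≥0∞) • lawAfter (hitT S sim) (Pstar s)
      = ∑ s' ∈ S, (∑ s ∈ S, (π s : ℝ≥0∞) * qmat S sim Pstar s s') • Pstar s' := by
    rw [Finset.sum_congr rfl fun s hs => by
      have := hprob s hs
      rw [(hregen s hs).lawAfter_eq_sum (measurableSet_hitT_le S sim) hprob]]
    simp only [Finset.smul_sum, smul_smul, Finset.sum_smul]
    exact Finset.sum_comm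
  rw [Measure.eq_iff_eq_of_add_eq_add (hregen_sum ▸ map_shiftI_lawP_add S sim π Pstar hT),
    sum_smul_eq_sum_smul_iff hprob hstart]

/-- If each `P*_s` starts at `s`, reaches a different class in an a.s. finite time with finite
mean, and regenerates at `T`, and if `π > 0` is normalized by `∑ π_s E*_s(T) = 1`, then the
probability measure `ℙ*` is shift-stationary iff `π` is invariant for the matrix
`Q = (P*_s(X_T = s'))`. -/
theorem stmt_6 [Fintype I] [MeasurableSingletonClass I]
    (S : Finset I) (hS : S.Nonempty) (hSc : ∃ i : I, i ∉ S)
    (sim : I → I → Prop) (hsim : Equivalence sim)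
    (Pstar : I → Measure (ℕ → I)) (hprob : ∀ s ∈ S, IsProbabilityMeasure (Pstar s))
    (hstart : ∀ s ∈ S, Pstar s {x | x 0 = s} = 1)
    (hTfin : ∀ s ∈ S, Pstar s {x | hitT S sim x < ⊤} = 1)
    (hETfin : ∀ s ∈ S, hitET S sim (Pstar s) < ⊤)
    (hregen : ∀ s ∈ S, Regen S (hitT S sim) Pstar (Pstar s))
    (π : I → ℝ≥0) (hπ : ∀ s ∈ S, 0 < π s)
    (hnorm : ∑ s ∈ S, (π s : ℝ≥0∞) * hitET S sim (Pstar s) = 1) :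
    (lawP S sim π Pstar).map (shiftI 1) = lawP S sim π Pstar ↔
      ∀ s ∈ S, (π s : ℝ≥0∞) = ∑ s' ∈ S, (π s' : ℝ≥0∞) * qmat S sim Pstar s' s :=
  stmt_6_general S sim Pstar hprob hstart hETfin hregen π
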